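/- Let G=(V,E) be a finite simple graph, A ⊆ V, and C ⊆ V. Suppose v ∈ C is a vertex with v ∉ A such that in G−(C\{v}) no attacked vertex is joined to v by a path. Then Φ(G−(C\{v})) ≤ Φ(G−C). (The first case distinction in the proof of Proposition 1: if putting a non-attacked vertex back does not create a vulnerable connection with it, the smaller deletion set is at least as good.) -/

import Mathlib

/-- The graph obtained from `G` by deleting the vertices in `C` (removing all
edges incident to `C`; the remaining adjacency is that of the induced subgraph on `Cᶜ`). -/
def delVerts {V : Type*} (G : SimpleGraph V) (C : Set V) : SimpleGraph V where
  Adj u v := G.Adj u v ∧ u ∉ C ∧ v ∉ C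
  symm := ⟨fun u v h => ⟨h.1.symm, h.2.2, h.2.1⟩⟩
  loopless := ⟨fun u h => G.loopless.irrefl u h.1⟩

/-- The set of unordered pairs of distinct vertices forming a vulnerable connection:
joined by a path, and at least one endpoint is attacked. -/
def vulPairs {V : Type*} (G : SimpleGraph V) (A : Set V) : Set (Sym2 V) :=
  {p | ∃ u v, p = s(u, v) ∧ u ≠ v ∧ G.Reachable u v ∧ (u ∈ A ∨ v ∈ A)}

/-- The `A`-vulnerability of a graph. -/
noncomputable def vul {V : Type*} (G : SimpleGraph V) (A : Set V) : ℕ :=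
  (vulPairs G A).ncard

/-- The set of unordered pairs of distinct vertices forming a healthy connection:
joined by a path, and no endpoint is attacked. -/
def healPairs {V : Type*} (G : SimpleGraph V) (A : Set V) : Set (Sym2 V) :=
  {p | ∃ u v, p = s(u, v) ∧ u ≠ v ∧ G.Reachable u v ∧ u ∉ A ∧ v ∉ A}

/-- The `A`-healthiness of a graph. -/
noncomputable def heal {V : Type*} (G : SimpleGraph V) (A : Set V) : ℕ :=
  (healPairs G A).ncard

/-- The objective value `Φ(G−C) = (|V|²+1)·vul(G−C) − heal(G−C)`, as an integer. -/
noncomputable def Phi {V : Type*} [Fintype V] (G : SimpleGraph V) (A C : Set V) : ℤ :=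
  ((Fintype.card V : ℤ) ^ 2 + 1) * (vul (delVerts G C) A : ℤ) - (heal (delVerts G C) A : ℤ)

/-- The vertex set of the connected component of `v` in `H` (including `v`). -/
def comp {V : Type*} (H : SimpleGraph V) (v : V) : Set V :=
  {u | H.Reachable v u}

lemma delVerts_mono {V : Type*} (G : SimpleGraph V) {C D : Set V} (hCD : D ⊆ C) :
    delVerts G C ≤ delVerts G D := by
  intro u w hw
  exact ⟨hw.1, fun hu => hw.2.1 (hCD hu), fun hu' => hw.2.2 (hCD hu')⟩

lemma walk_avoid {V : Type*} (G : SimpleGraph V) (C : Set V) (v : V) (hvC : v ∈ C)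
    {u w : V} (p : (delVerts G (C \ {v})).Walk u w) (hv : v ∉ p.support) :
    (delVerts G C).Reachable u w := by
  induction p with
  | nil => exact SimpleGraph.Reachable.refl _
  | @cons a b c hadj q ih =>
      simp only [SimpleGraph.Walk.support_cons, List.mem_cons, not_or] at hv
      have hb : b ∈ q.support := q.start_mem_support
      have hbv : b ≠ v := fun hbv => hv.2 (hbv ▸ hb)
      have hab : (delVerts G C).Adj a b := by
        refine ⟨hadj.1, ?_, ?_⟩
        · intro haC
          exact hadj.2.1 ⟨haC, fun ha => hv.1 (Set.mem_singleton_iff.mp ha).symm⟩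
        · intro hbC
          exact hadj.2.2 ⟨hbC, fun hb' => hbv (Set.mem_singleton_iff.mp hb')⟩
      exact (hab.reachable).trans (ih (fun hvq => hv.2 hvq))

/-- The first case distinction in the proof of Proposition 1: if putting a non-attacked
vertex back creates no vulnerable connection with it, the smaller deletion set is
at least as good. -/
theorem drop_vertex_if_no_vulnerable_connection
    {V : Type*} [Fintype V] (G : SimpleGraph V) (A C : Set V) (v : V)
    (hvC : v ∈ C) (hvA : v ∉ A)
    (h : ∀ a ∈ A, ¬ (delVerts G (C \ {v})).Reachable a v) :
    Phi G A (C \ {v}) ≤ Phi G A C := by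
  classical
  have hle : delVerts G C ≤ delVerts G (C \ {v}) :=
    delVerts_mono G (Set.diff_subset)
  -- vulPairs are equal
  have hvul : vulPairs (delVerts G (C \ {v})) A = vulPairs (delVerts G C) A := by
    apply Set.Subset.antisymm
    · rintro p ⟨u, w, rfl, hne, hr, hA⟩
      refine ⟨u, w, rfl, hne, ?_, hA⟩
      obtain ⟨q⟩ := hr
      have hvnot : v ∉ q.support := by
        intro hvq
        rcases hA with hA | hA
        · exact h u hA ⟨q.takeUntil v hvq⟩
        · exact h w hA (SimpleGraph.Reachable.symm ⟨q.dropUntil v hvq⟩)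
      exact walk_avoid G C v hvC q hvnot
    · rintro p ⟨u, w, rfl, hne, hr, hA⟩
      exact ⟨u, w, rfl, hne, hr.mono hle, hA⟩
  -- heal is monotone
  have hheal : heal (delVerts G C) A ≤ heal (delVerts G (C \ {v})) A := by
    apply Set.ncard_le_ncard _ (Set.toFinite _)
    rintro p ⟨u, w, rfl, hne, hr, hA⟩
    exact ⟨u, w, rfl, hne, hr.mono hle, hA⟩
  unfold Phi
  rw [show vul (delVerts G (C \ {v})) A = vul (delVerts G C) A by unfold vul; rw [hvul]]
  have : (heal (delVerts G C) A : ℤ) ≤ (heal (delVerts G (C \ {v})) A : ℤ) := by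
    exact_mod_cast hheal
  linarith
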